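/- arXiv:2408.15215 — 3 statements merged into one kernel-verified Lean document; each statement's English description precedes it below -/
import Mathlib

section
/- For every integer Δ ≥ 3, the equation x·γ_{Δ-1}(x) = γ_Δ(x) has a unique solution α_Δ in the interval (1, ∞), where γ_Δ(x) = Σ_{k=0}^{Δ-1} x^k/k!. -/
/-- `gam Δ x = ∑_{k=0}^{Δ-1} x^k / k!` -/
noncomputable def gam (Δ : ℕ) (x : ℝ) : ℝ :=
  ∑ k ∈ Finset.range Δ, x ^ k / (Nat.factorial k)

/-!
With `Δ = n + 2`, the gap `F(x) = x γ_{n+1}(x) - γ_{n+2}(x)` has derivative `x γ_n(x)`, since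
`γ_{k+1}' = γ_k`; so `F` is strictly increasing on `[0, ∞)`. As `F(1) = -1/(n+1)! < 0` and
`F(3) > 0`, the intermediate value theorem gives exactly one zero in `(1, ∞)`.
-/

open Set

lemma gam_succ (n : ℕ) (x : ℝ) : gam (n + 1) x = gam n x + x ^ n / n.factorial :=
  Finset.sum_range_succ _ _

lemma hasDerivAt_pow_div_factorial (n : ℕ) (x : ℝ) :
    HasDerivAt (fun y : ℝ ↦ y ^ (n + 1) / (n + 1).factorial) (x ^ n / n.factorial) x := by
  refine ((hasDerivAt_pow (n + 1) x).div_const _).congr_deriv ?_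
  rw [Nat.factorial_succ, Nat.cast_mul, Nat.add_sub_cancel]
  field_simp

lemma hasDerivAt_gam (n : ℕ) (x : ℝ) : HasDerivAt (gam (n + 1)) (gam n x) x := by
  induction n with
  | zero =>
    have : gam 1 = fun _ ↦ 1 := funext fun y ↦ by simp [gam]
    simpa [this, gam] using hasDerivAt_const x (1 : ℝ)
  | succ n ih =>
    rw [gam_succ n x]
    have : gam (n + 2) = fun y ↦ gam (n + 1) y + y ^ (n + 1) / (n + 1).factorial :=
      funext fun y ↦ gam_succ (n + 1) y
    rw [this]
    exact ih.add (hasDerivAt_pow_div_factorial n x)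

lemma continuous_gam (n : ℕ) : Continuous (gam n) := by
  unfold gam
  fun_prop

lemma gam_pos {n : ℕ} (hn : n ≠ 0) {x : ℝ} (hx : 0 ≤ x) : 0 < gam n x := by
  obtain ⟨m, rfl⟩ := Nat.exists_eq_succ_of_ne_zero hn
  induction m with
  | zero => simp [gam]
  | succ m ih => rw [gam_succ]; have := ih (by omega); positivity

lemma pow_div_factorial_le_gam (n : ℕ) {x : ℝ} (hx : 0 ≤ x) :
    x ^ n / n.factorial ≤ gam (n + 1) x := by
  rw [gam_succ]
  have : 0 ≤ gam n x := Finset.sum_nonneg fun k _ ↦ by positivity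
  linarith

/-- `α_Δ` is the zero of `gamGap (Δ - 2)` on `(1, ∞)`. -/
noncomputable def gamGap (n : ℕ) (x : ℝ) : ℝ := x * gam (n + 1) x - gam (n + 2) x

lemma gamGap_eq (n : ℕ) (x : ℝ) :
    gamGap n x = (x - 1) * gam (n + 1) x - x ^ (n + 1) / (n + 1).factorial := by
  rw [gamGap, gam_succ (n + 1)]
  ring

lemma hasDerivAt_gamGap (n : ℕ) (x : ℝ) : HasDerivAt (gamGap n) (x * gam n x) x := by
  have := ((hasDerivAt_id x).mul (hasDerivAt_gam n x)).sub (hasDerivAt_gam (n + 1) x)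
  refine this.congr_deriv ?_
  simp only [id, one_mul]
  ring

lemma continuous_gamGap (n : ℕ) : Continuous (gamGap n) :=
  (continuous_id.mul (continuous_gam _)).sub (continuous_gam _)

lemma strictMonoOn_gamGap {n : ℕ} (hn : n ≠ 0) : StrictMonoOn (gamGap n) (Ici 0) := by
  refine strictMonoOn_of_deriv_pos (convex_Ici 0) (continuous_gamGap n).continuousOn
    fun x hx ↦ ?_
  rw [interior_Ici, mem_Ioi] at hx
  rw [(hasDerivAt_gamGap n x).deriv]
  exact mul_pos hx (gam_pos hn hx.le)

lemma gamGap_one_neg (n : ℕ) : gamGap n 1 < 0 := by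
  rw [gamGap_eq]
  simp only [sub_self, zero_mul, one_pow, zero_sub, neg_lt_zero]
  positivity

lemma gamGap_three_pos {n : ℕ} (hn : n ≠ 0) : 0 < gamGap n 3 := by
  have hle := pow_div_factorial_le_gam n (x := 3) (by norm_num)
  have hfac : ((n + 1).factorial : ℝ) = (n + 1) * n.factorial := by
    push_cast [Nat.factorial_succ]; ring
  have hn1 : (1 : ℝ) ≤ n := by exact_mod_cast Nat.one_le_iff_ne_zero.mpr hn
  -- `(3 - 1) · 3ⁿ/n! > 3ⁿ⁺¹/(n+1)!` because `2 (n + 1) > 3`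
  have key : (3 : ℝ) ^ (n + 1) / (n + 1).factorial < (3 - 1) * (3 ^ n / n.factorial) := by
    rw [hfac, pow_succ, div_lt_iff₀ (by positivity)]
    field_simp
    nlinarith [pow_pos (three_pos (α := ℝ)) n]
  rw [gamGap_eq]
  nlinarith

/-- For every integer `Δ ≥ 3`, the equation `x * γ_{Δ-1}(x) = γ_Δ(x)` has a unique
solution in `(1, ∞)`. -/
theorem unique_alpha (Δ : ℕ) (hΔ : 3 ≤ Δ) :
    ∃! x : ℝ, x ∈ Set.Ioi (1 : ℝ) ∧ x * gam (Δ - 1) x = gam Δ x := by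
  obtain ⟨n, rfl⟩ : ∃ n, Δ = n + 2 := ⟨Δ - 2, by omega⟩
  have hn : n ≠ 0 := by omega
  have hroot : ∀ x, x * gam (n + 2 - 1) x = gam (n + 2) x ↔ gamGap n x = 0 :=
    fun _ ↦ sub_eq_zero.symm
  simp only [hroot]
  obtain ⟨α, hα, hαroot⟩ := intermediate_value_Ioo (by norm_num : (1 : ℝ) ≤ 3)
    (continuous_gamGap n).continuousOn ⟨gamGap_one_neg n, gamGap_three_pos hn⟩
  refine ⟨α, ⟨hα.1, hαroot⟩, fun y ⟨hy, hyroot⟩ ↦ ?_⟩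
  exact (strictMonoOn_gamGap hn).injOn (mem_Ici.2 (by linarith [mem_Ioi.1 hy]))
    (mem_Ici.2 (by linarith [hα.1])) (hyroot.trans hαroot.symm)
end

section
/- Let T be a tree on [n] with maximum degree at most Δ that contains as an induced subgraph a forest F with m non-empty components and ℓ total vertices (ℓ ≤ n). Then m ≤ 1 + (n−ℓ)(Δ−1). -/
/-!
Every tree edge with both ends in `A` is an edge of the forest `F`, so at least
`(n - 1) - (n - ℓ) Δ` of the `n - 1` edges of `T` lie in `F`, the remaining ones each being
incident to one of the `n - ℓ` vertices outside `A`. A forest on `ℓ` vertices with `e` edges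
has `ℓ - e` components, which gives `m ≤ ℓ - (n - 1) + (n - ℓ) Δ = 1 + (n - ℓ)(Δ - 1)`.
-/

open Finset

namespace SimpleGraph

variable {V : Type*} {G : SimpleGraph V} [Fintype V] [DecidableEq V] [DecidableRel G.Adj]

theorem card_edgeFinset_eq_sum_card_edgeFinset_induce_supp :
    #G.edgeFinset = ∑ c : G.ConnectedComponent, #(G.induce c.supp).edgeFinset := by
  have hpiece (c : G.ConnectedComponent) :
      #(G.induce c.supp).edgeFinset = #(G.edgeFinset ∩ c.supp.toFinset.sym2) := by
    rw [← map_edgeFinset_induce, card_map]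
  have hcover : G.edgeFinset =
      univ.biUnion fun c : G.ConnectedComponent => G.edgeFinset ∩ c.supp.toFinset.sym2 := by
    ext e
    induction e with
    | _ u v =>
      simp only [mem_biUnion, mem_univ, true_and, mem_inter, mk_mem_sym2_iff, Set.mem_toFinset]
      refine ⟨fun huv => ⟨G.connectedComponentMk u, huv, rfl, ?_⟩,
        fun ⟨_, huv, _⟩ => huv⟩
      exact (G.connectedComponentMk u).mem_supp_congr_adj (G.mem_edgeFinset.mp huv) |>.1 rfl
  rw [sum_congr rfl fun c _ => hpiece c, ← card_biUnion, ← hcover]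
  intro c _ d _ hcd
  have hmem (c : G.ConnectedComponent) {e : Sym2 V}
      (he : e ∈ G.edgeFinset ∩ c.supp.toFinset.sym2) : e.out.1 ∈ c.supp :=
    Set.mem_toFinset.mp (mem_sym2_iff.mp (mem_inter.mp he).2 _ e.out_fst_mem)
  exact Finset.disjoint_left.mpr fun e hc hd =>
    hcd (ConnectedComponent.eq_of_common_vertex (hmem c hc) (hmem d hd))

theorem IsAcyclic.card_connectedComponent_add_card_edgeFinset (h : G.IsAcyclic) :
    Nat.card G.ConnectedComponent + #G.edgeFinset = Fintype.card V := by
  classical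
  have htree (c : G.ConnectedComponent) :
      #(G.induce c.supp).edgeFinset + 1 = Fintype.card c.supp := by
    rw [edgeFinset_card, ← Nat.card_eq_fintype_card, ← Nat.card_eq_fintype_card]
    exact (isTree_iff_connected_and_card.mp (h.isTree_connectedComponent c)).2
  have hvert : Fintype.card V = ∑ c : G.ConnectedComponent, Fintype.card c.supp := by
    rw [← Fintype.card_congr (Equiv.sigmaFiberEquiv G.connectedComponentMk), Fintype.card_sigma]
    exact sum_congr rfl fun c _ => Fintype.card_congr (Equiv.refl _)
  rw [hvert, card_edgeFinset_eq_sum_card_edgeFinset_induce_supp, Nat.card_eq_fintype_card,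
    ← sum_congr rfl fun c _ => htree c, sum_add_distrib, sum_const, card_univ, smul_eq_mul,
    mul_one, add_comm]

theorem card_edgeFinset_le_card_edgeFinset_induce_add (s : Set V) [DecidablePred (· ∈ s)]
    {Δ : ℕ} (hΔ : ∀ v ∉ s, G.degree v ≤ Δ) :
    #G.edgeFinset ≤ #(G.induce s).edgeFinset + #sᶜ.toFinset * Δ := by
  have hcover : G.edgeFinset ⊆
      (G.edgeFinset ∩ s.toFinset.sym2) ∪ sᶜ.toFinset.biUnion (G.incidenceFinset ·) := by
    intro e he
    by_cases hin : e ∈ s.toFinset.sym2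
    · exact mem_union_left _ (mem_inter.mpr ⟨he, hin⟩)
    · obtain ⟨v, hve, hvs⟩ : ∃ v ∈ e, v ∉ s := by simpa [mem_sym2_iff] using hin
      refine mem_union_right _ (mem_biUnion.mpr ⟨v, by simpa using hvs, ?_⟩)
      exact (G.mem_incidenceFinset v e).mpr ⟨G.mem_edgeFinset.mp he, hve⟩
  calc #G.edgeFinset
      ≤ #(G.edgeFinset ∩ s.toFinset.sym2) + #(sᶜ.toFinset.biUnion (G.incidenceFinset ·)) :=
        (card_le_card hcover).trans (card_union_le _ _)
    _ ≤ #(G.induce s).edgeFinset + #sᶜ.toFinset * Δ := by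
      rw [← map_edgeFinset_induce, card_map]
      refine Nat.add_le_add_left (card_biUnion_le_card_mul _ _ _ fun v hv => ?_) _
      rw [card_incidenceFinset_eq_degree]
      exact hΔ v (by simpa using hv)

end SimpleGraph

open SimpleGraph in
theorem components_bound_general (n Δ ℓ m : ℕ)
    (T F : SimpleGraph (Fin n)) (A : Set (Fin n))
    (hT : T.IsTree) (hdeg : ∀ v, (T.neighborSet v).ncard ≤ Δ)
    (hF : F.IsAcyclic) (hA : A.ncard = ℓ)
    (hind : ∀ u ∈ A, ∀ v ∈ A, (T.Adj u v ↔ F.Adj u v))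
    (hm : Nat.card (F.induce A).ConnectedComponent = m) :
    m ≤ 1 + (n - ℓ) * (Δ - 1) := by
  classical
  have hFT : F.induce A = T.induce A := by
    ext u v
    exact (hind u u.2 v v.2).symm
  have hcompl : ℓ + Aᶜ.ncard = n := by
    rw [← hA, Set.ncard_add_ncard_compl, Nat.card_eq_fintype_card, Fintype.card_fin]
  have hacyclic : (T.induce A).IsAcyclic := hFT ▸ hF.of_comap _
  have hforest : m + #(T.induce A).edgeFinset = ℓ := by
    rw [← hm, hFT, ← hA, Set.ncard_eq_toFinset_card', Set.toFinset_card]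
    exact hacyclic.card_connectedComponent_add_card_edgeFinset
  have htree : #T.edgeFinset + 1 = n := by simpa using hT.card_edgeFinset
  have hdegree (v : Fin n) : T.degree v ≤ Δ := by
    simpa [← card_neighborSet_eq_degree, Set.ncard_eq_toFinset_card'] using hdeg v
  have hsplit : #T.edgeFinset ≤ #(T.induce A).edgeFinset + (n - ℓ) * Δ := by
    rw [show n - ℓ = #Aᶜ.toFinset by rw [← Set.ncard_eq_toFinset_card']; omega]
    exact T.card_edgeFinset_le_card_edgeFinset_induce_add A fun v _ => hdegree v
  have hmul : (n - ℓ) * Δ ≤ (n - ℓ) * (Δ - 1) + (n - ℓ) := by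
    rw [← Nat.mul_succ]
    exact Nat.mul_le_mul_left _ (by omega)
  omega

/-- If a tree `T` on `[n]` with maximum degree at most `Δ` contains as an induced
subgraph a forest `F` with vertex set `A` of size `ℓ` and `m` connected components,
then `m ≤ 1 + (n−ℓ)(Δ−1)`. -/
theorem components_bound (n Δ ℓ m : ℕ) (hΔ : 3 ≤ Δ)
    (T F : SimpleGraph (Fin n)) (A : Set (Fin n))
    (hT : T.IsTree) (hdeg : ∀ v, (T.neighborSet v).ncard ≤ Δ)
    (hF : F.IsAcyclic) (hsupp : F.support ⊆ A) (hA : A.ncard = ℓ)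
    (hind : ∀ u ∈ A, ∀ v ∈ A, (T.Adj u v ↔ F.Adj u v))
    (hm : Nat.card (F.induce A).ConnectedComponent = m) :
    m ≤ 1 + (n - ℓ) * (Δ - 1) :=
  components_bound_general n Δ ℓ m T F A hT hdeg hF hA hind hm
end

section
/- For positive reals y_1, y_2, y_3, define ρ(x) = (y_1 y_2^x / x^{y_3})^x on (0,∞). Then for any 0 < a ≤ b, max_{a ≤ x ≤ b} ρ(x) ≤ max{ exp((y_3/2)·y_1^{1/y_3}), ρ(a), ρ(b) }. -/
/-!
Write `ρ = exp ∘ F` with `F x = x log y₁ + x² log y₂ - y₃ x log x`. On `[a, b]` the continuous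
`F` attains its maximum at an endpoint or at an interior critical point `c`. There
`F'(c) = 0` eliminates the `x² log y₂` term, leaving `F c = (y₃/2) c (A + 1 - log c)` with
`A = log y₁ / y₃`, and `c (A + 1 - log c) ≤ e^A = y₁^(1/y₃)` is `1 + t ≤ eᵗ` at `t = A - log c`.
-/

open Real Set

noncomputable def logRho (y₁ y₂ y₃ x : ℝ) : ℝ :=
  x * log y₁ + x ^ 2 * log y₂ - y₃ * (x * log x)

theorem rpow_eq_exp_logRho {y₁ y₂ : ℝ} (y₃ : ℝ) (hy₁ : 0 < y₁) (hy₂ : 0 < y₂) {x : ℝ}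
    (hx : 0 < x) : (y₁ * y₂ ^ x / x ^ y₃) ^ x = exp (logRho y₁ y₂ y₃ x) := by
  rw [rpow_def_of_pos (by positivity), log_div (by positivity) (by positivity),
    log_mul hy₁.ne' (by positivity), log_rpow hy₂, log_rpow hx, logRho]
  ring_nf

theorem hasDerivAt_logRho (y₁ y₂ y₃ : ℝ) {x : ℝ} (hx : x ≠ 0) :
    HasDerivAt (logRho y₁ y₂ y₃) (log y₁ + 2 * x * log y₂ - y₃ * (log x + 1)) x := by
  refine ((((hasDerivAt_id x).mul_const (log y₁)).add
    ((hasDerivAt_pow 2 x).mul_const (log y₂))).sub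
      ((hasDerivAt_mul_log hx).const_mul y₃)).congr_deriv ?_
  simp only [Nat.cast_ofNat]
  ring

theorem continuousOn_logRho (y₁ y₂ y₃ : ℝ) {s : Set ℝ} (hs : (0 : ℝ) ∉ s) :
    ContinuousOn (logRho y₁ y₂ y₃) s := fun _ hx =>
  (hasDerivAt_logRho y₁ y₂ y₃ (ne_of_mem_of_not_mem hx hs)).continuousAt.continuousWithinAt

theorem logRho_eq_of_deriv_eq_zero {y₁ y₂ y₃ c : ℝ} (hy₃ : y₃ ≠ 0)
    (hc : log y₁ + 2 * c * log y₂ - y₃ * (log c + 1) = 0) :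
    logRho y₁ y₂ y₃ c = y₃ / 2 * (c * (log y₁ / y₃ + 1 - log c)) := by
  rw [logRho]
  field_simp
  linear_combination c * hc

theorem mul_add_one_sub_log_le_exp (A : ℝ) {c : ℝ} (hc : 0 < c) :
    c * (A + 1 - log c) ≤ exp A := by
  have h := add_one_le_exp (A - log c)
  rw [exp_sub, exp_log hc, le_div_iff₀ hc] at h
  linarith

theorem logRho_le_of_isLocalMax {y₁ y₂ y₃ c : ℝ} (hy₁ : 0 < y₁) (hy₃ : 0 < y₃) (hc : 0 < c)
    (hmax : IsLocalMax (logRho y₁ y₂ y₃) c) :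
    logRho y₁ y₂ y₃ c ≤ y₃ / 2 * y₁ ^ (1 / y₃) := by
  have hcrit := hmax.hasDerivAt_eq_zero (hasDerivAt_logRho y₁ y₂ y₃ hc.ne')
  rw [logRho_eq_of_deriv_eq_zero hy₃.ne' hcrit, rpow_def_of_pos hy₁, mul_one_div]
  gcongr
  exact mul_add_one_sub_log_le_exp _ hc

theorem ContinuousOn.le_max_of_isLocalMax {α : Type*} [LinearOrder α] [TopologicalSpace α]
    [OrderClosedTopology α] {f : ℝ → α} {a b x : ℝ} {M : α} (hf : ContinuousOn f (Icc a b))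
    (hx : x ∈ Icc a b) (hloc : ∀ c ∈ Ioo a b, IsLocalMax f c → f c ≤ M) :
    f x ≤ max M (max (f a) (f b)) := by
  obtain ⟨c, hc, hmax⟩ := isCompact_Icc.exists_isMaxOn ⟨x, hx⟩ hf
  refine (hmax hx).trans ?_
  rcases eq_endpoints_or_mem_Ioo_of_mem_Icc hc with rfl | rfl | hc'
  · exact le_max_of_le_right (le_max_left _ _)
  · exact le_max_of_le_right (le_max_right _ _)
  · exact le_max_of_le_left (hloc c hc' (hmax.isLocalMax (Icc_mem_nhds hc'.1 hc'.2)))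

theorem rho_max_bound_general (y₁ y₂ y₃ : ℝ) (hy₁ : 0 < y₁) (hy₂ : 0 < y₂) (hy₃ : 0 < y₃)
    (a b : ℝ) (ha : 0 < a) (x : ℝ) (hx : x ∈ Set.Icc a b) :
    (y₁ * y₂ ^ x / x ^ y₃) ^ x
      ≤ max (Real.exp ((y₃ / 2) * y₁ ^ (1 / y₃)))
          (max ((y₁ * y₂ ^ a / a ^ y₃) ^ a) ((y₁ * y₂ ^ b / b ^ y₃) ^ b)) := by
  have hpos {t : ℝ} (ht : t ∈ Icc a b) : 0 < t := ha.trans_le ht.1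
  have hbound : logRho y₁ y₂ y₃ x ≤
      max (y₃ / 2 * y₁ ^ (1 / y₃)) (max (logRho y₁ y₂ y₃ a) (logRho y₁ y₂ y₃ b)) :=
    (continuousOn_logRho y₁ y₂ y₃ fun h => (hpos h).false).le_max_of_isLocalMax hx
      fun c hc => logRho_le_of_isLocalMax hy₁ hy₃ (ha.trans hc.1)
  rw [rpow_eq_exp_logRho y₃ hy₁ hy₂ (hpos hx), rpow_eq_exp_logRho y₃ hy₁ hy₂ ha,
    rpow_eq_exp_logRho y₃ hy₁ hy₂ (hpos ⟨hx.1.trans hx.2, le_rfl⟩),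
    ← exp_monotone.map_max, ← exp_monotone.map_max]
  exact exp_le_exp.2 hbound

/-- For positive reals `y₁, y₂, y₃` and `ρ(x) = (y₁·y₂^x / x^{y₃})^x` on `(0,∞)`:
for any `0 < a ≤ b`, the maximum of `ρ` on `[a,b]` is at most
`max{exp((y₃/2)·y₁^{1/y₃}), ρ(a), ρ(b)}`. -/
theorem rho_max_bound (y₁ y₂ y₃ : ℝ) (hy₁ : 0 < y₁) (hy₂ : 0 < y₂) (hy₃ : 0 < y₃)
    (a b : ℝ) (ha : 0 < a) (hab : a ≤ b) (x : ℝ) (hx : x ∈ Set.Icc a b) :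
    (y₁ * y₂ ^ x / x ^ y₃) ^ x
      ≤ max (Real.exp ((y₃ / 2) * y₁ ^ (1 / y₃)))
          (max ((y₁ * y₂ ^ a / a ^ y₃) ^ a) ((y₁ * y₂ ^ b / b ^ y₃) ^ b)) :=
  rho_max_bound_general y₁ y₂ y₃ hy₁ hy₂ hy₃ a b ha x hx
end
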